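/- arXiv:1201.1342 — 2 statements merged into one kernel-verified Lean document; each statement's English description precedes it below -/
import Mathlib

section
/- For any conjugate-linear anti-involution θ of the Schrödinger–Virasoro Lie algebra 𝔰𝔳, θ maps the subspace M ⊕ Y onto itself, where M = span_ℂ{M_n : n ∈ ℤ} and Y = span_ℂ{Y_{n+1/2} : n ∈ ℤ}. -/
/-- Index type for the distinguished basis of the Schrödinger–Virasoro algebra.
`Y n` stands for the basis element `Y_{n+1/2}`. -/
inductive SVIndex : Type
  | L : ℤ → SVIndex
  | M : ℤ → SVIndex
  | Y : ℤ → SVIndex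
  | c : SVIndex

/-- A realization of the Schrödinger–Virasoro Lie algebra: a complex Lie algebra `sv`
with distinguished elements `L n`, `M n`, `Y n` (representing `Y_{n+1/2}`) and `c`
which form a basis and satisfy the defining bracket relations. -/
structure SVAlgebra (sv : Type*) [LieRing sv] [LieAlgebra ℂ sv] where
  L : ℤ → sv
  M : ℤ → sv
  Y : ℤ → sv
  c : sv
  indep : LinearIndependent ℂ (fun i : SVIndex =>
    match i with
    | .L n => L n
    | .M n => M n
    | .Y n => Y n
    | .c => c)
  span_top : Submodule.span ℂ (Set.range (fun i : SVIndex =>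
    match i with
    | .L n => L n
    | .M n => M n
    | .Y n => Y n
    | .c => c)) = ⊤
  bracket_LL : ∀ m n : ℤ, ⁅L m, L n⁆ =
    ((n : ℂ) - (m : ℂ)) • L (m + n)
      + (if m + n = 0 then ((m : ℂ) ^ 3 - (m : ℂ)) / 12 else 0) • c
  bracket_LM : ∀ m n : ℤ, ⁅L m, M n⁆ = (n : ℂ) • M (m + n)
  bracket_LY : ∀ m n : ℤ, ⁅L m, Y n⁆ = ((n : ℂ) + (1 - (m : ℂ)) / 2) • Y (m + n)
  bracket_YY : ∀ m n : ℤ, ⁅Y m, Y n⁆ = ((n : ℂ) - (m : ℂ)) • M (m + n + 1)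
  bracket_MM : ∀ m n : ℤ, ⁅M m, M n⁆ = 0
  bracket_MY : ∀ m n : ℤ, ⁅M m, Y n⁆ = 0
  bracket_c : ∀ x : sv, ⁅x, c⁆ = 0

/-- A conjugate-linear anti-involution of a complex Lie algebra. -/
structure ConjAntiInvolution (sv : Type*) [LieRing sv] [LieAlgebra ℂ sv] where
  toFun : sv → sv
  map_add' : ∀ x y : sv, toFun (x + y) = toFun x + toFun y
  map_smul' : ∀ (a : ℂ) (x : sv), toFun (a • x) = (starRingEnd ℂ a) • toFun x
  map_bracket' : ∀ x y : sv, toFun ⁅x, y⁆ = ⁅toFun y, toFun x⁆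
  invol' : ∀ x : sv, toFun (toFun x) = x

/-!
Filter `𝔰𝔳` by the degree of the `L`-component, with the ideal `K = span {M n, Y n, c}` in
degree `⊥`. The bracket respects the filtration, and modulo lower degree it is the Witt
bracket: the leading coefficient of `⁅x, y⁆` in degree `p + q` is `(q - p) a b`. Hence if
`u ∉ K` has leading term `a L_N`, then `(ad u)^j L_k` has non-zero leading coefficient for all
`j` once `k` is generic, so `ad u` is not nilpotent; conversely `(ad x)^3 = 0` for `x ∈ K`.
Thus `K` is the set of ad-nilpotent elements, which an anti-involution `θ` preserves. Finally
every `M n` and `Y n` is a multiple of some `⁅z, x⁆` with `x ∈ K`, so `θ` maps it into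
`θ ⁅z, x⁆ = ⁅θ x, θ z⁆ ∈ ⁅K, 𝔰𝔳⁆ ⊆ M ⊕ Y`; surjectivity follows from `θ ∘ θ = id`.
-/
open Submodule Set

section LieSpan

variable {R L : Type*} [CommRing R] [LieRing L] [LieAlgebra R L]

theorem lie_mem_of_mem_span {s t : Set L} {p : Submodule R L} {x y : L}
    (hx : x ∈ span R s) (hy : y ∈ span R t) (h : ∀ a ∈ s, ∀ b ∈ t, ⁅a, b⁆ ∈ p) :
    ⁅x, y⁆ ∈ p := by
  let bracket : L →ₗ[R] L →ₗ[R] L := LieModule.toEnd R L L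
  have hle : map₂ bracket (span R s) (span R t) ≤ p := by
    rw [map₂_span_span, span_le]
    rintro _ ⟨a, ha, b, hb, rfl⟩
    exact h a ha b hb
  exact hle (apply_mem_map₂ bracket hx hy)

end LieSpan

namespace ConjAntiInvolution

variable {sv : Type*} [LieRing sv] [LieAlgebra ℂ sv] (θ : ConjAntiInvolution sv)

def toSemilinearMap : sv →ₗ⋆[ℂ] sv where
  toFun := θ.toFun
  map_add' := θ.map_add'
  map_smul' := θ.map_smul'

theorem mapsTo_span {s : Set sv} {p : Submodule ℂ sv} (h : MapsTo θ.toFun s p) :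
    MapsTo θ.toFun (span ℂ s) p := fun _ hx =>
  (map_span_le θ.toSemilinearMap s p).2 h (mem_map_of_mem hx)

theorem image_eq_of_mapsTo {s : Set sv} (h : MapsTo θ.toFun s s) : θ.toFun '' s = s :=
  (RightInvOn.surjOn (fun x _ => θ.invol' x) h).image_eq_of_mapsTo h

theorem ad_apply_self (u y : sv) :
    LieAlgebra.ad ℂ sv (θ.toFun u) (θ.toFun y) = θ.toFun (-LieAlgebra.ad ℂ sv u y) := by
  rw [LieAlgebra.ad_apply, LieAlgebra.ad_apply, ← θ.map_bracket', ← lie_skew]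

theorem isNilpotent_ad {u : sv} (hu : IsNilpotent (LieAlgebra.ad ℂ sv u)) :
    IsNilpotent (LieAlgebra.ad ℂ sv (θ.toFun u)) := by
  have key : ∀ (k : ℕ) (z : sv), (LieAlgebra.ad ℂ sv (θ.toFun u) ^ k) (θ.toFun z) =
      θ.toFun (((-LieAlgebra.ad ℂ sv u) ^ k) z) := by
    intro k z
    induction k with
    | zero => rfl
    | succ k ih =>
      rw [pow_succ', pow_succ', Module.End.mul_apply, Module.End.mul_apply, ih, ad_apply_self]
      rfl
  obtain ⟨n, hn⟩ := hu.neg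
  refine ⟨n, LinearMap.ext fun y => ?_⟩
  rw [LinearMap.zero_apply, ← θ.invol' y, key, hn, LinearMap.zero_apply]
  exact map_zero θ.toSemilinearMap

end ConjAntiInvolution

namespace SVIndex

def wittDeg : SVIndex → WithBot ℤ
  | L n => n
  | _ => ⊥

end SVIndex

namespace SVAlgebra

variable {sv : Type*} [LieRing sv] [LieAlgebra ℂ sv] (A : SVAlgebra sv)

noncomputable def basis : Module.Basis SVIndex ℂ sv := .mk A.indep A.span_top.ge

@[simp] theorem basis_L (n : ℤ) : A.basis (.L n) = A.L n := Module.Basis.mk_apply ..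
@[simp] theorem basis_M (n : ℤ) : A.basis (.M n) = A.M n := Module.Basis.mk_apply ..
@[simp] theorem basis_Y (n : ℤ) : A.basis (.Y n) = A.Y n := Module.Basis.mk_apply ..
@[simp] theorem basis_c : A.basis .c = A.c := Module.Basis.mk_apply ..

@[simp] theorem repr_L (n : ℤ) : A.basis.repr (A.L n) = Finsupp.single (.L n) 1 := by
  rw [← basis_L, Module.Basis.repr_self]

@[simp] theorem repr_c : A.basis.repr A.c = Finsupp.single .c 1 := by
  rw [← basis_c, Module.Basis.repr_self]

theorem lie_M_L (m n : ℤ) : ⁅A.M m, A.L n⁆ = -((m : ℂ) • A.M (n + m)) := by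
  rw [← lie_skew, A.bracket_LM]

theorem lie_Y_L (m n : ℤ) :
    ⁅A.Y m, A.L n⁆ = -(((m : ℂ) + (1 - (n : ℂ)) / 2) • A.Y (n + m)) := by
  rw [← lie_skew, A.bracket_LY]

theorem lie_Y_M (m n : ℤ) : ⁅A.Y m, A.M n⁆ = 0 := by
  rw [← lie_skew, A.bracket_MY, neg_zero]

theorem lie_c_left (x : sv) : ⁅A.c, x⁆ = 0 := by
  rw [← lie_skew, A.bracket_c, neg_zero]

theorem M_eq_smul_lie_L_zero {n : ℤ} (hn : n ≠ 0) : A.M n = (n : ℂ)⁻¹ • ⁅A.L 0, A.M n⁆ := by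
  rw [A.bracket_LM, zero_add, smul_smul, inv_mul_cancel₀ (Int.cast_ne_zero.2 hn), one_smul]

theorem M_zero_eq_lie : A.M 0 = ⁅A.Y (-1), A.Y 0⁆ := by
  rw [A.bracket_YY]
  norm_num

theorem Y_eq_smul_lie_L_zero (n : ℤ) : A.Y n = ((n : ℂ) + 1 / 2)⁻¹ • ⁅A.L 0, A.Y n⁆ := by
  have hn : (n : ℂ) + 1 / 2 ≠ 0 := by
    intro h
    have h2 : ((2 * n + 1 : ℤ) : ℂ) = 0 := by push_cast; linear_combination 2 * h
    have h3 : 2 * n + 1 = 0 := by exact_mod_cast h2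
    omega
  rw [A.bracket_LY, zero_add, Int.cast_zero, sub_zero, smul_smul, inv_mul_cancel₀ hn, one_smul]

def spanM : Submodule ℂ sv := span ℂ (range A.M)

def spanMY : Submodule ℂ sv := span ℂ (range A.M ∪ range A.Y)

theorem M_mem_spanM (n : ℤ) : A.M n ∈ A.spanM := subset_span ⟨n, rfl⟩

theorem M_mem_spanMY (n : ℤ) : A.M n ∈ A.spanMY := subset_span (.inl ⟨n, rfl⟩)

theorem Y_mem_spanMY (n : ℤ) : A.Y n ∈ A.spanMY := subset_span (.inr ⟨n, rfl⟩)

/-- The filtration of `sv` by the degree of the component in `span {L n}`; its bottom piece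
`filtration ⊥ = span {M n, Y n, c}` is the kernel of the projection onto the Witt algebra. -/
def filtration (d : WithBot ℤ) : Submodule ℂ sv := span ℂ (A.basis '' {i | i.wittDeg ≤ d})

theorem mem_filtration_iff {x : sv} {d : WithBot ℤ} :
    x ∈ A.filtration d ↔ ∀ i, A.basis.repr x i ≠ 0 → i.wittDeg ≤ d := by
  rw [filtration, Module.Basis.mem_span_image]
  exact ⟨fun h i hi => h (Finsupp.mem_support_iff.2 hi),
    fun h i hi => h i (Finsupp.mem_support_iff.1 hi)⟩

theorem filtration_mono : Monotone A.filtration := fun _ _ hde =>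
  span_mono (image_mono fun _ hi => le_trans hi hde)

theorem basis_mem_filtration (i : SVIndex) : A.basis i ∈ A.filtration i.wittDeg :=
  subset_span ⟨i, le_refl i.wittDeg, rfl⟩

theorem basis_mem_filtration_bot {i : SVIndex} (hi : i.wittDeg = ⊥) :
    A.basis i ∈ A.filtration ⊥ :=
  hi ▸ A.basis_mem_filtration i

theorem L_mem_filtration (n : ℤ) : A.L n ∈ A.filtration n :=
  A.basis_L n ▸ A.basis_mem_filtration (.L n)

theorem c_mem_filtration_bot : A.c ∈ A.filtration ⊥ :=
  A.basis_c ▸ A.basis_mem_filtration_bot rfl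

theorem spanMY_le_filtration_bot : A.spanMY ≤ A.filtration ⊥ := by
  rw [spanMY, span_le]
  rintro _ (⟨n, rfl⟩ | ⟨n, rfl⟩)
  · exact A.basis_M n ▸ A.basis_mem_filtration_bot rfl
  · exact A.basis_Y n ▸ A.basis_mem_filtration_bot rfl

theorem lie_mem_spanMY_of_mem_filtration_bot {x : sv} (hx : x ∈ A.filtration ⊥) (y : sv) :
    ⁅x, y⁆ ∈ A.spanMY := by
  refine lie_mem_of_mem_span hx (A.basis.mem_span y) ?_
  rintro _ ⟨i, hi, rfl⟩ _ ⟨j, rfl⟩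
  cases i <;> cases j <;> simp_all [SVIndex.wittDeg, A.bracket_MM, A.bracket_MY, A.bracket_YY,
    A.bracket_c, lie_M_L, lie_Y_L, lie_Y_M, lie_c_left, smul_mem, M_mem_spanMY, Y_mem_spanMY]

theorem lie_mem_spanM_of_mem_filtration_bot {x y : sv} (hx : x ∈ A.filtration ⊥)
    (hy : y ∈ A.spanMY) : ⁅x, y⁆ ∈ A.spanM := by
  refine lie_mem_of_mem_span hx hy ?_
  rintro _ ⟨i, hi, rfl⟩ _ (⟨n, rfl⟩ | ⟨n, rfl⟩)
  all_goals cases i <;> simp_all [SVIndex.wittDeg, A.bracket_MM, A.bracket_MY, A.bracket_YY,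
    lie_Y_M, lie_c_left, smul_mem, M_mem_spanM]

theorem lie_eq_zero_of_mem_filtration_bot {x y : sv} (hx : x ∈ A.filtration ⊥)
    (hy : y ∈ A.spanM) : ⁅x, y⁆ = 0 := by
  rw [← mem_bot ℂ]
  refine lie_mem_of_mem_span hx hy ?_
  rintro _ ⟨i, hi, rfl⟩ _ ⟨n, rfl⟩
  cases i <;> simp_all [SVIndex.wittDeg, A.bracket_MM, lie_Y_M, lie_c_left]

theorem ad_pow_three_eq_zero {x : sv} (hx : x ∈ A.filtration ⊥) :
    LieAlgebra.ad ℂ sv x ^ 3 = 0 := by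
  refine LinearMap.ext fun y => ?_
  simp only [pow_succ, pow_zero, one_mul, Module.End.mul_apply, LieAlgebra.ad_apply,
    LinearMap.zero_apply]
  exact A.lie_eq_zero_of_mem_filtration_bot hx
    (A.lie_mem_spanM_of_mem_filtration_bot hx (A.lie_mem_spanMY_of_mem_filtration_bot hx y))

theorem lie_mem_filtration {x y : sv} {p q : WithBot ℤ} (hx : x ∈ A.filtration p)
    (hy : y ∈ A.filtration q) : ⁅x, y⁆ ∈ A.filtration (p + q) := by
  have hleft : ∀ {a : sv} (b : sv), a ∈ A.filtration ⊥ → ⁅a, b⁆ ∈ A.filtration (p + q) :=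
    fun b ha => A.filtration_mono bot_le
      (A.spanMY_le_filtration_bot (A.lie_mem_spanMY_of_mem_filtration_bot ha b))
  have hright : ∀ (a : sv) {b : sv}, b ∈ A.filtration ⊥ → ⁅a, b⁆ ∈ A.filtration (p + q) :=
    fun a _ hb => lie_skew a _ ▸ neg_mem (hleft a hb)
  refine lie_mem_of_mem_span hx hy ?_
  rintro _ ⟨i, hi, rfl⟩ _ ⟨j, hj, rfl⟩
  rcases i with m | m | m | _
  · rcases j with n | n | n | _
    · have hmn : ((m + n : ℤ) : WithBot ℤ) ≤ p + q := WithBot.coe_add m n ▸ add_le_add hi hj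
      rw [basis_L, basis_L, A.bracket_LL]
      exact add_mem (smul_mem _ _ (A.filtration_mono hmn (A.L_mem_filtration _)))
        (smul_mem _ _ (A.filtration_mono bot_le A.c_mem_filtration_bot))
    all_goals exact hright _ (A.basis_mem_filtration_bot rfl)
  all_goals exact hleft _ (A.basis_mem_filtration_bot rfl)

theorem lie_mem_filtration_coe {x y : sv} {p q r : ℤ} (hx : x ∈ A.filtration p)
    (hy : y ∈ A.filtration q) (hr : p + q ≤ r) : ⁅x, y⁆ ∈ A.filtration r :=
  A.filtration_mono (WithBot.coe_le_coe.2 hr) (WithBot.coe_add p q ▸ A.lie_mem_filtration hx hy)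

theorem repr_L_eq_zero_of_mem_filtration {x : sv} {d : WithBot ℤ} {n : ℤ}
    (hx : x ∈ A.filtration d) (hdn : d < n) : A.basis.repr x (.L n) = 0 := by
  by_contra h
  exact not_le_of_gt hdn (A.mem_filtration_iff.1 hx _ h)

theorem sub_smul_L_mem_filtration {x : sv} {p : ℤ} (hx : x ∈ A.filtration p) :
    x - A.basis.repr x (.L p) • A.L p ∈ A.filtration ↑(p - 1) := by
  rw [mem_filtration_iff]
  intro i hi
  rw [map_sub, map_smul, repr_L] at hi
  cases i with
  | L n =>
    have hnp : n ≠ p := by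
      rintro rfl
      simp at hi
    simp only [Finsupp.coe_sub, Pi.sub_apply, Finsupp.smul_apply, ne_eq, SVIndex.L.injEq,
      hnp.symm, not_false_eq_true, Finsupp.single_eq_of_ne', smul_zero, sub_zero] at hi
    have hnp_le := A.mem_filtration_iff.1 hx _ hi
    simp only [SVIndex.wittDeg, WithBot.coe_le_coe] at hnp_le ⊢
    omega
  | _ => exact bot_le

theorem repr_lie_L {x y : sv} {p q : ℤ} (hx : x ∈ A.filtration p) (hy : y ∈ A.filtration q) :
    A.basis.repr ⁅x, y⁆ (.L (p + q)) =
      ((q : ℂ) - p) * A.basis.repr x (.L p) * A.basis.repr y (.L q) := by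
  set a := A.basis.repr x (.L p)
  set b := A.basis.repr y (.L q)
  set x' := x - a • A.L p
  set y' := y - b • A.L q
  have hx' : x' ∈ A.filtration ↑(p - 1) := A.sub_smul_L_mem_filtration hx
  have hy' : y' ∈ A.filtration ↑(q - 1) := A.sub_smul_L_mem_filtration hy
  have hrest : a • ⁅A.L p, y'⁆ + b • ⁅x', A.L q⁆ + ⁅x', y'⁆ ∈ A.filtration ↑(p + q - 1) :=
    add_mem (add_mem
      (smul_mem _ _ (A.lie_mem_filtration_coe (A.L_mem_filtration p) hy' (by omega)))
      (smul_mem _ _ (A.lie_mem_filtration_coe hx' (A.L_mem_filtration q) (by omega))))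
      (A.lie_mem_filtration_coe hx' hy' (by omega))
  have hsplit : ⁅x, y⁆ = (a * b) • ⁅A.L p, A.L q⁆ +
      (a • ⁅A.L p, y'⁆ + b • ⁅x', A.L q⁆ + ⁅x', y'⁆) := by
    conv_lhs => rw [← add_sub_cancel (a • A.L p) x, ← add_sub_cancel (b • A.L q) y]
    simp only [add_lie, lie_add, smul_lie, lie_smul]
    module
  rw [hsplit, map_add, Finsupp.add_apply, A.repr_L_eq_zero_of_mem_filtration hrest
    (WithBot.coe_lt_coe.2 (by omega)), add_zero, A.bracket_LL]
  simp only [smul_add, map_add, map_smul, repr_L, repr_c, Finsupp.coe_add, Finsupp.coe_smul,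
    Pi.add_apply, Pi.smul_apply, smul_eq_mul, ne_eq, reduceCtorEq, not_false_eq_true,
    Finsupp.single_eq_same, Finsupp.single_eq_of_ne, mul_zero, add_zero]
  ring

theorem exists_mem_filtration_repr_ne_zero {x : sv} (hx : x ∉ A.filtration ⊥) :
    ∃ N : ℤ, x ∈ A.filtration N ∧ A.basis.repr x (.L N) ≠ 0 := by
  have hxd : x ∈ A.filtration ((A.basis.repr x).support.sup SVIndex.wittDeg) :=
    A.mem_filtration_iff.2 fun i hi => Finset.le_sup (Finsupp.mem_support_iff.2 hi)
  have hne : (A.basis.repr x).support.Nonempty := by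
    rw [Finset.nonempty_iff_ne_empty]
    rintro h
    rw [h, Finset.sup_empty] at hxd
    exact hx hxd
  obtain ⟨i, hi, hid⟩ := Finset.exists_mem_eq_sup _ hne SVIndex.wittDeg
  rw [hid] at hxd
  rcases i with N | _ | _ | _
  · exact ⟨N, hxd, Finsupp.mem_support_iff.1 hi⟩
  all_goals exact absurd hxd hx

theorem mem_filtration_bot_of_isNilpotent_ad {u : sv}
    (hu : IsNilpotent (LieAlgebra.ad ℂ sv u)) : u ∈ A.filtration ⊥ := by
  by_contra hu'
  obtain ⟨N, huN, ha⟩ := A.exists_mem_filtration_repr_ne_zero hu'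
  obtain ⟨n, hn⟩ := hu
  obtain ⟨k, hk⟩ : ∃ k : ℤ, ∀ j : ℕ, j < n → j * N + k ≠ N := by
    refine ⟨n * |N| + 1, fun j hj heq => ?_⟩
    have hjn : (j : ℤ) + 1 ≤ n := by exact_mod_cast hj
    rcases abs_cases N with ⟨h, _⟩ | ⟨h, _⟩ <;> rw [h] at heq <;> nlinarith
  -- the leading coefficient of `(ad u)^j (L k)` is `a^j ∏_{i<j} (i N + k - N)`, `a = repr u (L N)`
  have key : ∀ j : ℕ, j ≤ n →
      (LieAlgebra.ad ℂ sv u ^ j) (A.L k) ∈ A.filtration ↑(j * N + k) ∧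
      A.basis.repr ((LieAlgebra.ad ℂ sv u ^ j) (A.L k)) (.L (j * N + k)) ≠ 0 := by
    intro j
    induction j with
    | zero => simp [A.L_mem_filtration]
    | succ j ih =>
      intro hj
      obtain ⟨hmem, hne⟩ := ih (by omega)
      have hdeg : ((j + 1 : ℕ) : ℤ) * N + k = N + (j * N + k) := by push_cast; ring
      rw [pow_succ', Module.End.mul_apply, LieAlgebra.ad_apply, hdeg]
      refine ⟨A.lie_mem_filtration_coe huN hmem le_rfl, ?_⟩
      rw [A.repr_lie_L huN hmem]
      refine mul_ne_zero (mul_ne_zero (sub_ne_zero.2 ?_) ha) hne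
      exact_mod_cast hk j (by omega)
  have hzero := (key n le_rfl).2
  rw [hn, LinearMap.zero_apply, map_zero, Finsupp.zero_apply] at hzero
  exact hzero rfl

theorem isNilpotent_ad_iff {u : sv} :
    IsNilpotent (LieAlgebra.ad ℂ sv u) ↔ u ∈ A.filtration ⊥ :=
  ⟨A.mem_filtration_bot_of_isNilpotent_ad, fun hu => ⟨3, A.ad_pow_three_eq_zero hu⟩⟩

theorem antiInvolution_mem_filtration_bot (θ : ConjAntiInvolution sv) {x : sv}
    (hx : x ∈ A.filtration ⊥) : θ.toFun x ∈ A.filtration ⊥ :=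
  A.isNilpotent_ad_iff.1 (θ.isNilpotent_ad (A.isNilpotent_ad_iff.2 hx))

theorem antiInvolution_lie_mem_spanMY (θ : ConjAntiInvolution sv) (z : sv) {x : sv}
    (hx : x ∈ A.filtration ⊥) : θ.toFun ⁅z, x⁆ ∈ A.spanMY := by
  rw [θ.map_bracket']
  exact A.lie_mem_spanMY_of_mem_filtration_bot (A.antiInvolution_mem_filtration_bot θ hx) _

end SVAlgebra

variable {sv : Type*} [LieRing sv] [LieAlgebra ℂ sv]

/-- Any conjugate-linear anti-involution of `𝔰𝔳` maps `M ⊕ Y` onto itself. -/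
theorem sv_antiInvolution_preserves_MY (A : SVAlgebra sv) (θ : ConjAntiInvolution sv) :
    θ.toFun '' ↑(Submodule.span ℂ (Set.range A.M ∪ Set.range A.Y)) =
      ↑(Submodule.span ℂ (Set.range A.M ∪ Set.range A.Y)) := by
  have hM : ∀ n, A.M n ∈ A.filtration ⊥ := fun n =>
    A.spanMY_le_filtration_bot (A.M_mem_spanMY n)
  have hY : ∀ n, A.Y n ∈ A.filtration ⊥ := fun n =>
    A.spanMY_le_filtration_bot (A.Y_mem_spanMY n)
  refine θ.image_eq_of_mapsTo (θ.mapsTo_span ?_)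
  rintro _ (⟨n, rfl⟩ | ⟨n, rfl⟩)
  · rcases eq_or_ne n 0 with rfl | hn
    · rw [A.M_zero_eq_lie]
      exact A.antiInvolution_lie_mem_spanMY θ _ (hY 0)
    · rw [A.M_eq_smul_lie_L_zero hn, θ.map_smul']
      exact smul_mem _ _ (A.antiInvolution_lie_mem_spanMY θ _ (hM n))
  · rw [A.Y_eq_smul_lie_L_zero n, θ.map_smul']
    exact smul_mem _ _ (A.antiInvolution_lie_mem_spanMY θ _ (hY n))
end

section
/- Let V be an 𝔰𝔳-module and let (x_n)_{n∈ℤ} be arbitrary complex scalars. If (L_n + x_n·M_n)·v = 0 and c·v = 0 for all n ∈ ℤ and all v ∈ V, then M_n·v = 0 and Y_{n+1/2}·v = 0 for all n ∈ ℤ and all v ∈ V; consequently 𝔰𝔳·V = 0. -/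
variable {sv : Type*} [LieRing sv] [LieAlgebra ℂ sv]

variable {V : Type*} [AddCommGroup V] [Module ℂ V] [LieRingModule sv V] [LieModule ℂ sv V]

/-!
The kernel of the representation is a Lie ideal containing every `L n + x n • M n`, and any such
ideal is everything: `L 0 + x 0 • M 0` acts on `Y k` by the nonzero scalar `k + 1/2` (the `M`'s
commute with the `Y`'s), brackets of `Y`'s produce every `M n`, hence every `L n`, and
`⁅L 2, L (-2)⁆ = -4 • L 0 + (1/2) • c` produces the central charge.
-/

theorem LieSubmodule.smul_mem_iff {K L M : Type*} [Field K] [LieRing L] [AddCommGroup M]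
    [Module K M] [LieRingModule L M] (N : LieSubmodule K L M) {a : K} (ha : a ≠ 0) {m : M} :
    a • m ∈ N ↔ m ∈ N :=
  Submodule.smul_mem_iff (N : Submodule K M) ha

namespace SVAlgebra

variable (A : SVAlgebra sv) {I : LieIdeal ℂ sv}

theorem lie_L_zero_add_smul_M_zero_Y (a : ℂ) (k : ℤ) :
    ⁅A.L 0 + a • A.M 0, A.Y k⁆ = ((k : ℂ) + 1 / 2) • A.Y k := by
  rw [add_lie, smul_lie, A.bracket_LY, A.bracket_MY, smul_zero, add_zero, zero_add]
  norm_num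

theorem Y_mem_of_L_zero_add_smul_M_zero_mem {a : ℂ} (h : A.L 0 + a • A.M 0 ∈ I) (k : ℤ) :
    A.Y k ∈ I := by
  have hk : (k : ℂ) + 1 / 2 ≠ 0 := by
    have hodd : ((2 * k + 1 : ℤ) : ℂ) ≠ 0 := by exact_mod_cast (by omega : 2 * k + 1 ≠ 0)
    contrapose! hodd
    push_cast
    linear_combination 2 * hodd
  exact (I.smul_mem_iff hk).1 (A.lie_L_zero_add_smul_M_zero_Y a k ▸ lie_mem_left ℂ sv I _ _ h)

theorem M_mem_of_forall_Y_mem (hY : ∀ k, A.Y k ∈ I) (n : ℤ) : A.M n ∈ I := by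
  -- `⁅Y m, Y (n - m - 1)⁆ = (n - 2m - 1) • M n`, and `m = 0` or `m = 1` makes the scalar nonzero.
  obtain ⟨m, hm⟩ : ∃ m : ℤ, n - m - 1 - m ≠ 0 := by
    rcases eq_or_ne n 1 with rfl | hn
    exacts [⟨1, by norm_num⟩, ⟨0, by omega⟩]
  have hbracket := lie_mem_left ℂ sv I _ (A.Y (n - m - 1)) (hY m)
  rw [A.bracket_YY, show m + (n - m - 1) + 1 = n by ring] at hbracket
  exact (I.smul_mem_iff (by exact_mod_cast hm)).1 hbracket

theorem c_mem_of_forall_L_mem (hL : ∀ n, A.L n ∈ I) : A.c ∈ I := by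
  have hbracket : ⁅A.L 2, A.L (-2)⁆ = (-4 : ℂ) • A.L 0 + (1 / 2 : ℂ) • A.c := by
    rw [A.bracket_LL]
    norm_num
  have hc : (1 / 2 : ℂ) • A.c ∈ I := by
    rw [← add_sub_cancel_left ((-4 : ℂ) • A.L 0) ((1 / 2 : ℂ) • A.c), ← hbracket]
    exact I.sub_mem (lie_mem_left ℂ sv I _ _ (hL 2)) (I.smul_mem _ (hL 0))
  exact (I.smul_mem_iff (by norm_num)).1 hc

theorem eq_top_of_generators_mem (hL : ∀ n, A.L n ∈ I) (hM : ∀ n, A.M n ∈ I)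
    (hY : ∀ n, A.Y n ∈ I) (hc : A.c ∈ I) : I = ⊤ := by
  rw [← LieSubmodule.toSubmodule_inj, LieSubmodule.top_toSubmodule, eq_top_iff, ← A.span_top,
    Submodule.span_le]
  rintro _ ⟨i | i | i | _, rfl⟩
  exacts [hL i, hM i, hY i, hc]

theorem eq_top_of_forall_L_add_smul_M_mem (x : ℤ → ℂ) (hI : ∀ n, A.L n + x n • A.M n ∈ I) :
    I = ⊤ := by
  have hY := A.Y_mem_of_L_zero_add_smul_M_zero_mem (hI 0)
  have hM := A.M_mem_of_forall_Y_mem hY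
  have hL : ∀ n, A.L n ∈ I := fun n => by
    simpa using I.sub_mem (hI n) (I.smul_mem (x n) (hM n))
  exact A.eq_top_of_generators_mem hL hM hY (A.c_mem_of_forall_L_mem hL)

end SVAlgebra

theorem sv_trivial_on_virasoro_copy_implies_trivial_general (A : SVAlgebra sv) (x : ℤ → ℂ)
    (h : ∀ (n : ℤ) (v : V), ⁅A.L n + (x n) • A.M n, v⁆ = 0) :
    (∀ (n : ℤ) (v : V), ⁅A.M n, v⁆ = 0 ∧ ⁅A.Y n, v⁆ = 0) ∧
    (∀ (g : sv) (v : V), ⁅g, v⁆ = 0) := by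
  have hker : LieModule.ker ℂ sv V = ⊤ :=
    A.eq_top_of_forall_L_add_smul_M_mem x fun n => (LieModule.mem_ker ℂ sv V _).2 (h n)
  have htrivial (g : sv) (v : V) : ⁅g, v⁆ = 0 :=
    (LieModule.mem_ker ℂ sv V g).1 (hker ▸ LieSubmodule.mem_top g) v
  exact ⟨fun n v => ⟨htrivial _ v, htrivial _ v⟩, htrivial⟩

/-- If the elements `L_n + x_n·M_n` and `c` all act as zero on an `𝔰𝔳`-module `V`,
then `M` and `Y` also act as zero; consequently `𝔰𝔳·V = 0`. -/
theorem sv_trivial_on_virasoro_copy_implies_trivial (A : SVAlgebra sv) (x : ℤ → ℂ)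
    (h : ∀ (n : ℤ) (v : V), ⁅A.L n + (x n) • A.M n, v⁆ = 0)
    (hc : ∀ v : V, ⁅A.c, v⁆ = 0) :
    (∀ (n : ℤ) (v : V), ⁅A.M n, v⁆ = 0 ∧ ⁅A.Y n, v⁆ = 0) ∧
    (∀ (g : sv) (v : V), ⁅g, v⁆ = 0) :=
  sv_trivial_on_virasoro_copy_implies_trivial_general A x h
end
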